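/- arXiv:2312.16595 — 4 statements merged into one kernel-verified Lean document; each statement's English description precedes it below -/
import Mathlib

section
/- If ξ ~ Min-U-Exp(a,λ), then for every natural number k ≥ 1, E[ξ^k] = (k/λ^k)·(γ(k, aλ) - γ(k+1, aλ)/(aλ)), where γ(s,x) = ∫₀ˣ t^{s-1}e^{-t}dt is the lower incomplete gamma function. -/
/-!
The density is `-S'` for the survival function `S x = e^{-λx} (a - x) / a`, which vanishes at
`a`; integrating by parts gives `E[ξ^k] = k ∫₀ᵃ x^{k-1} S x dx`. Splitting `(a - x) / a` and
substituting `t = λx` turns the two resulting integrals into `γ(k, aλ)` and `γ(k + 1, aλ)`.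
-/

open MeasureTheory Real Set

/-- The lower incomplete gamma function γ(s, x) = ∫₀ˣ t^{s-1} e^{-t} dt. -/
noncomputable def lowerGamma (s x : ℝ) : ℝ := ∫ t in (0 : ℝ)..x, t ^ (s - 1) * Real.exp (-t)

theorem integral_pow_mul_exp_neg_mul (n : ℕ) {c : ℝ} (hc : 0 < c) (X : ℝ) :
    ∫ x in (0 : ℝ)..X, x ^ n * exp (-(c * x)) = lowerGamma (n + 1) (c * X) / c ^ (n + 1) := by
  have hG : lowerGamma (n + 1) (c * X) = ∫ t in (0 : ℝ)..c * X, t ^ n * exp (-t) := by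
    simp [lowerGamma]
  have hsub := intervalIntegral.integral_comp_mul_left
    (fun t => t ^ n * exp (-t)) (a := 0) (b := X) hc.ne'
  simp only [mul_zero, mul_pow, mul_assoc, smul_eq_mul, intervalIntegral.integral_const_mul] at hsub
  rw [hG, eq_div_iff (by positivity), pow_succ, ← mul_assoc, mul_comm _ (c ^ n), hsub]
  field_simp

theorem integral_pow_succ_mul_eq_integral_survival {S p : ℝ → ℝ} {b : ℝ} (n : ℕ)
    (hS : ∀ x ∈ uIcc 0 b, HasDerivAt S (-p x) x) (hp : IntervalIntegrable p volume 0 b)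
    (hSb : S b = 0) :
    ∫ x in (0 : ℝ)..b, x ^ (n + 1) * p x = (n + 1) * ∫ x in (0 : ℝ)..b, x ^ n * S x := by
  have hparts := intervalIntegral.integral_mul_deriv_eq_deriv_mul
    (u := fun x => x ^ (n + 1)) (u' := fun x => (n + 1) * x ^ n) (v := -S)
    (fun x _ => by simpa using hasDerivAt_pow (n + 1) x)
    (fun x hx => by simpa only [neg_neg] using (hS x hx).neg)
    ((by fun_prop : Continuous fun x : ℝ => ((n : ℝ) + 1) * x ^ n).intervalIntegrable _ _) hp
  simp only [hparts, hSb, Pi.neg_apply, neg_zero, mul_zero, zero_pow n.succ_ne_zero, zero_mul,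
    sub_zero, zero_sub, ← intervalIntegral.integral_neg, ← intervalIntegral.integral_const_mul]
  congr 1 with x
  ring

theorem hasDerivAt_minUExp_survival (a lam x : ℝ) :
    HasDerivAt (fun y => exp (-lam * y) * (a - y) / a)
      (-(exp (-lam * x) / a * (lam * a + 1 - lam * x))) x :=
  ((((hasDerivAt_id' x).const_mul (-lam)).exp.mul ((hasDerivAt_id' x).const_sub a)).div_const
    a).congr_deriv (by ring)

theorem minUExp_moments (a lam : ℝ) (ha : 0 < a) (hlam : 0 < lam) :
    ∀ k : ℕ, 1 ≤ k →
      (∫ x in Set.Ioo (0 : ℝ) a, x ^ k * (Real.exp (-lam * x) / a * (lam * a + 1 - lam * x)))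
        = (k : ℝ) / lam ^ k *
            (lowerGamma k (a * lam) - lowerGamma (k + 1) (a * lam) / (a * lam)) := by
  intro k hk
  obtain ⟨n, rfl⟩ : ∃ n, k = n + 1 := ⟨k - 1, by omega⟩
  have hsplit : ∫ x in (0 : ℝ)..a, x ^ n * (exp (-lam * x) * (a - x) / a)
      = (∫ x in (0 : ℝ)..a, x ^ n * exp (-(lam * x)))
        - (∫ x in (0 : ℝ)..a, x ^ (n + 1) * exp (-(lam * x))) / a := by
    rw [← intervalIntegral.integral_div, ← intervalIntegral.integral_sub]
    · congr 1 with x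
      field_simp
      ring
    all_goals exact Continuous.intervalIntegrable (by fun_prop) _ _
  rw [← integral_Ioc_eq_integral_Ioo, ← intervalIntegral.integral_of_le ha.le,
    integral_pow_succ_mul_eq_integral_survival n
      (fun x _ => hasDerivAt_minUExp_survival a lam x)
      (Continuous.intervalIntegrable (by fun_prop) _ _) (by simp),
    hsplit, integral_pow_mul_exp_neg_mul n hlam, integral_pow_mul_exp_neg_mul (n + 1) hlam,
    mul_comm lam a]
  push_cast
  field_simp
  ring
end

section
/- Let G(x) = 2x(x - 2 + xe^{-x} + 2e^{-x})/(x - 1 + e^{-x})² for x > 0. Then lim_{x→0⁺} G(x) = 4/3 and lim_{x→∞} G(x) = 2. -/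
/-!
Write `G(x) = 2x N(x) / D(x)²` with `N(x) = x - 2 + (x + 2)e^{-x}` and `D(x) = x - 1 + e^{-x}`.
At `0⁺`, `N` vanishes to third order and `D` to second order: repeated l'Hôpital gives
`N(x)/x³ → 1/6` and `D(x)/x² → 1/2`, so `G = 2 (N/x³) / (D/x²)² → 2 · (1/6) / (1/2)² = 4/3`.
At `∞`, `N(x)/x → 1` and `D(x)/x → 1`, so `G = 2 (N/x) / (D/x)² → 2`.
-/

open Real Set Filter Topology

noncomputable def gNum (x : ℝ) : ℝ := x - 2 + x * exp (-x) + 2 * exp (-x)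

noncomputable def gDen (x : ℝ) : ℝ := x - 1 + exp (-x)

lemma tendsto_div_pow_succ_of_hasDerivAt {f f' : ℝ → ℝ} {n : ℕ} {L : ℝ}
    (hf : ∀ x, HasDerivAt f (f' x) x) (hf0 : f 0 = 0)
    (hf' : Tendsto (fun x => f' x / x ^ n) (𝓝[>] 0) (𝓝 L)) :
    Tendsto (fun x => f x / x ^ (n + 1)) (𝓝[>] 0) (𝓝 (L / (n + 1))) := by
  refine HasDerivAt.lhopital_zero_nhdsGT (f' := f') (g' := fun x => (n + 1) * x ^ n)
    (Eventually.of_forall hf) (Eventually.of_forall fun x => ?_) ?_ ?_ ?_ ?_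
  · simpa using hasDerivAt_pow (n + 1) x
  · filter_upwards [self_mem_nhdsWithin] with x (hx : 0 < x)
    positivity
  · simpa [hf0] using (hf 0).continuousAt.tendsto.mono_left nhdsWithin_le_nhds
  · simpa using ((continuous_pow (n + 1)).tendsto (0 : ℝ)).mono_left nhdsWithin_le_nhds
  · simpa only [div_div, mul_comm] using hf'.div_const ((n : ℝ) + 1)

lemma hasDerivAt_exp_neg (x : ℝ) : HasDerivAt (fun x => exp (-x)) (-exp (-x)) x := by
  simpa using (hasDerivAt_neg x).exp

lemma tendsto_exp_neg_nhdsGT_zero : Tendsto (fun x : ℝ => exp (-x)) (𝓝[>] 0) (𝓝 1) := by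
  have h : Continuous fun x : ℝ => exp (-x) := by fun_prop
  simpa using (h.tendsto 0).mono_left nhdsWithin_le_nhds

lemma tendsto_gDen_div_sq : Tendsto (fun x => gDen x / x ^ 2) (𝓝[>] 0) (𝓝 (1 / 2)) := by
  have hD : ∀ x, HasDerivAt gDen (1 - exp (-x)) x := fun x =>
    (((hasDerivAt_id' x).sub_const 1).add (hasDerivAt_exp_neg x)).congr_deriv (by ring)
  have hD' : ∀ x, HasDerivAt (fun x => 1 - exp (-x)) (exp (-x)) x := fun x => by
    simpa using (hasDerivAt_exp_neg x).const_sub 1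
  have hD'_div := tendsto_div_pow_succ_of_hasDerivAt (n := 0) hD' (by simp)
    (by simpa using tendsto_exp_neg_nhdsGT_zero)
  convert tendsto_div_pow_succ_of_hasDerivAt hD (by simp [gDen]) hD'_div using 2
  norm_num

lemma tendsto_gNum_div_cube : Tendsto (fun x => gNum x / x ^ 3) (𝓝[>] 0) (𝓝 (1 / 6)) := by
  have hN : ∀ x, HasDerivAt gNum (1 - (x + 1) * exp (-x)) x := fun x =>
    ((((hasDerivAt_id' x).sub_const 2).add ((hasDerivAt_id' x).mul (hasDerivAt_exp_neg x))).add
      ((hasDerivAt_exp_neg x).const_mul 2)).congr_deriv (by ring)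
  have hN' : ∀ x, HasDerivAt (fun x => 1 - (x + 1) * exp (-x)) (x * exp (-x)) x := fun x =>
    ((((hasDerivAt_id' x).add_const 1).mul (hasDerivAt_exp_neg x)).const_sub 1).congr_deriv
      (by ring)
  have hN''_div : Tendsto (fun x => x * exp (-x) / x ^ 1) (𝓝[>] 0) (𝓝 1) := by
    refine tendsto_exp_neg_nhdsGT_zero.congr' ?_
    filter_upwards [self_mem_nhdsWithin] with x (hx : 0 < x)
    field_simp
  have hN'_div := tendsto_div_pow_succ_of_hasDerivAt hN' (by simp) hN''_div
  convert tendsto_div_pow_succ_of_hasDerivAt hN (by simp [gNum]) hN'_div using 2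
  norm_num

lemma tendsto_exp_neg_div_atTop : Tendsto (fun x => exp (-x) / x) atTop (𝓝 0) := by
  simpa [div_eq_mul_inv] using tendsto_exp_neg_atTop_nhds_zero.mul tendsto_inv_atTop_zero

lemma tendsto_gNum_div_atTop : Tendsto (fun x => gNum x / x) atTop (𝓝 1) := by
  have h : Tendsto (fun x => 1 - 2 * x⁻¹ + exp (-x) + 2 * (exp (-x) / x)) atTop
      (𝓝 (1 - 2 * 0 + 0 + 2 * 0)) :=
    ((tendsto_const_nhds.sub (tendsto_inv_atTop_zero.const_mul 2)).add
      tendsto_exp_neg_atTop_nhds_zero).add (tendsto_exp_neg_div_atTop.const_mul 2)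
  norm_num at h
  refine h.congr' ?_
  filter_upwards [eventually_ne_atTop 0] with x hx
  simp only [gNum]
  field_simp

lemma tendsto_gDen_div_atTop : Tendsto (fun x => gDen x / x) atTop (𝓝 1) := by
  have h : Tendsto (fun x => 1 - x⁻¹ + exp (-x) / x) atTop (𝓝 (1 - 0 + 0)) :=
    (tendsto_const_nhds.sub tendsto_inv_atTop_zero).add tendsto_exp_neg_div_atTop
  norm_num at h
  refine h.congr' ?_
  filter_upwards [eventually_ne_atTop 0] with x hx
  simp only [gDen]
  field_simp

lemma mul_mul_div_sq_eq_div_pow {x : ℝ} (hx : x ≠ 0) (c a b : ℝ) (n : ℕ) :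
    c * x * a / b ^ 2 = c * (a / x ^ (2 * n + 1)) / (b / x ^ (n + 1)) ^ 2 := by
  rw [div_pow, ← pow_mul]
  field_simp
  ring

theorem G_limits :
    Filter.Tendsto
      (fun x : ℝ =>
        2 * x * (x - 2 + x * Real.exp (-x) + 2 * Real.exp (-x)) / (x - 1 + Real.exp (-x)) ^ 2)
      (nhdsWithin 0 (Set.Ioi 0)) (nhds (4 / 3)) ∧
    Filter.Tendsto
      (fun x : ℝ =>
        2 * x * (x - 2 + x * Real.exp (-x) + 2 * Real.exp (-x)) / (x - 1 + Real.exp (-x)) ^ 2)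
      atTop (nhds 2) := by
  change Tendsto (fun x => 2 * x * gNum x / gDen x ^ 2) _ _ ∧
    Tendsto (fun x => 2 * x * gNum x / gDen x ^ 2) _ _
  constructor
  · have h := (tendsto_gNum_div_cube.const_mul 2).div (tendsto_gDen_div_sq.pow 2) (by norm_num)
    norm_num at h
    refine h.congr' ?_
    filter_upwards [self_mem_nhdsWithin] with x (hx : 0 < x)
    exact (mul_mul_div_sq_eq_div_pow hx.ne' 2 _ _ 1).symm
  · have h := (tendsto_gNum_div_atTop.const_mul 2).div (tendsto_gDen_div_atTop.pow 2) (by norm_num)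
    norm_num at h
    refine h.congr' ?_
    filter_upwards [eventually_ne_atTop 0] with x hx
    simpa using (mul_mul_div_sq_eq_div_pow hx 2 (gNum x) (gDen x) 0).symm
end

section
/- The function F(t) = t/(λ+t) - (t/(a(λ+t)²))·(1 - e^{-a(λ+t)}) for t > 0 (and 0 for t ≤ 0) is a cumulative distribution function: it is nondecreasing, right-continuous, tends to 0 as t → -∞ and to 1 as t → ∞. -/
open Real Set Filter Topology

/-- CDF of the Exp-Min-U-Exp(a, λ) distribution. -/
noncomputable def expMinUExpCDF (a lam t : ℝ) : ℝ :=
  if t ≤ 0 then 0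
  else t / (lam + t) - t / (a * (lam + t) ^ 2) * (1 - Real.exp (-a * (lam + t)))

/-!
For `t > 0` the CDF factors as `t / (λ + t) * (1 - (1 - e^{-x}) / x)` with `x = a (λ + t)`.
Both factors are nonnegative and nondecreasing in `t`: `(1 - e^{-x}) / x` is the slope of `exp`
on `[-x, 0]`, which decreases in `x` by convexity, and is at most `1` since `1 - x ≤ e^{-x}`.
Writing `F t = G (max t 0)` with `G` this product gives monotonicity and continuity at once.
-/

theorem antitoneOn_one_sub_exp_neg_div : AntitoneOn (fun x : ℝ => (1 - exp (-x)) / x) (Ioi 0) := by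
  intro x hx y hy hxy
  have key := convexOn_exp.secant_mono (a := 0) (x := -y) (y := -x) (mem_univ _) (mem_univ _)
    (mem_univ _) (neg_ne_zero.2 (ne_of_gt hy)) (neg_ne_zero.2 (ne_of_gt hx)) (neg_le_neg hxy)
  simpa only [exp_zero, sub_zero, div_neg, neg_div, ← neg_sub (1 : ℝ), neg_neg] using key

theorem one_sub_exp_neg_div_le_one {x : ℝ} (hx : 0 < x) : (1 - exp (-x)) / x ≤ 1 :=
  (div_le_one hx).2 (by linarith [add_one_le_exp (-x)])

theorem tendsto_one_sub_exp_neg_div_atTop :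
    Tendsto (fun x : ℝ => (1 - exp (-x)) / x) atTop (𝓝 0) :=
  (tendsto_exp_neg_atTop_nhds_zero.const_sub 1).div_atTop tendsto_id

theorem monotoneOn_div_const_add {c : ℝ} (hc : 0 < c) :
    MonotoneOn (fun t : ℝ => t / (c + t)) (Ici 0) := by
  intro x hx y hy hxy
  rw [mem_Ici] at hx hy
  rw [div_le_div_iff₀ (by positivity) (by positivity)]
  nlinarith

theorem tendsto_div_const_add_atTop (c : ℝ) :
    Tendsto (fun t : ℝ => t / (c + t)) atTop (𝓝 1) := by
  have h : Tendsto (fun t : ℝ => 1 - c / (c + t)) atTop (𝓝 (1 - 0)) :=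
    (tendsto_const_nhds.div_atTop (tendsto_atTop_add_const_left _ c tendsto_id)).const_sub 1
  rw [sub_zero] at h
  refine h.congr' ?_
  filter_upwards [eventually_gt_atTop (-c)] with t ht
  rw [one_sub_div (by linarith), add_sub_cancel_left]

noncomputable def expMinUExpCDFFactored (a lam t : ℝ) : ℝ :=
  t / (lam + t) * (1 - (1 - exp (-(a * (lam + t)))) / (a * (lam + t)))

theorem expMinUExpCDF_eq_factored_max (a lam t : ℝ) :
    expMinUExpCDF a lam t = expMinUExpCDFFactored a lam (max t 0) := by
  unfold expMinUExpCDF expMinUExpCDFFactored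
  split_ifs with ht
  · simp [max_eq_right ht]
  · rw [max_eq_left (le_of_not_ge ht), neg_mul]
    generalize lam + t = s
    ring

section

variable {a lam : ℝ} (ha : 0 < a) (hlam : 0 < lam)
include ha hlam

theorem monotoneOn_expMinUExpCDFFactored : MonotoneOn (expMinUExpCDFFactored a lam) (Ici 0) := by
  have hpos : ∀ t ∈ Ici (0 : ℝ), 0 < a * (lam + t) := fun t ht => by
    rw [mem_Ici] at ht; positivity
  refine (monotoneOn_div_const_add hlam).mul ?_ (fun t ht => ?_) (fun t ht => ?_)
  · intro x hx y hy hxy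
    have := antitoneOn_one_sub_exp_neg_div (hpos x hx) (hpos y hy) (by gcongr)
    simpa only [sub_le_sub_iff_left] using this
  · rw [mem_Ici] at ht; positivity
  · exact sub_nonneg.2 (one_sub_exp_neg_div_le_one (hpos t ht))

theorem continuousOn_expMinUExpCDFFactored :
    ContinuousOn (expMinUExpCDFFactored a lam) (Ici 0) := by
  intro t ht
  rw [mem_Ici] at ht
  apply ContinuousAt.continuousWithinAt
  unfold expMinUExpCDFFactored
  fun_prop (disch := positivity)

end

theorem tendsto_expMinUExpCDFFactored_atTop {a : ℝ} (ha : 0 < a) (lam : ℝ) :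
    Tendsto (expMinUExpCDFFactored a lam) atTop (𝓝 1) := by
  have hx : Tendsto (fun t => a * (lam + t)) atTop atTop :=
    (tendsto_atTop_add_const_left _ lam tendsto_id).const_mul_atTop ha
  have h := (tendsto_div_const_add_atTop lam).mul
    ((tendsto_one_sub_exp_neg_div_atTop.comp hx).const_sub 1)
  rwa [sub_zero, mul_one] at h

theorem expMinUExp_is_cdf (a lam : ℝ) (ha : 0 < a) (hlam : 0 < lam) :
    Monotone (expMinUExpCDF a lam) ∧
    (∀ t : ℝ, ContinuousWithinAt (expMinUExpCDF a lam) (Set.Ici t) t) ∧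
    Filter.Tendsto (expMinUExpCDF a lam) atBot (nhds 0) ∧
    Filter.Tendsto (expMinUExpCDF a lam) atTop (nhds 1) := by
  have hF : expMinUExpCDF a lam = expMinUExpCDFFactored a lam ∘ fun t => max t 0 :=
    funext (expMinUExpCDF_eq_factored_max a lam)
  have hmax : ∀ t : ℝ, max t 0 ∈ Ici 0 := fun t => le_max_right t 0
  refine ⟨?_, fun t => ?_, ?_, ?_⟩
  · intro x y hxy
    rw [hF]
    exact monotoneOn_expMinUExpCDFFactored ha hlam (hmax x) (hmax y) (max_le_max_right 0 hxy)
  · rw [hF]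
    exact ((continuousOn_expMinUExpCDFFactored ha hlam).comp_continuous
      (continuous_id.max continuous_const) hmax).continuousWithinAt
  · refine tendsto_const_nhds.congr' ?_
    filter_upwards [eventually_le_atBot 0] with t ht
    rw [expMinUExpCDF, if_pos ht]
  · rw [hF]
    exact (tendsto_expMinUExpCDFFactored_atTop ha lam).comp
      (tendsto_atTop_mono (le_max_left · 0) tendsto_id)
end

section
/- If η ~ Exp(1) and ξ ~ Min-U-Exp(a,λ) are independent, then τ = η/ξ has CDF F(t) = t/(λ+t) - (t/(a(λ+t)²))·(1 - e^{-a(λ+t)}) for t > 0; i.e., η/ξ ~ Exp-Min-U-Exp(a,λ). -/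
/-!
By independence, `P(η / ξ ≤ t) = E[1 - e^{-tξ}] = ∫₀ᵃ f(x) (1 - e^{-tx}) dx`, where `f` is the
Min-U-Exp density. Writing `f(x) (1 - e^{-tx}) = (e^{-λx} - e^{-(λ+t)x}) (λa + 1 - λx) / a`
reduces this to two integrals `∫₀ᵃ e^{-cx} (A - λx) dx` with elementary antiderivatives; for
`c = λ` the boundary term at `x = a` vanishes because `A = λa + 1`.
-/

open MeasureTheory ProbabilityTheory Real Set

/-- The density of the Min-U-Exp(a, λ) distribution. -/
noncomputable def minUExpPDF (a lam x : ℝ) : ℝ :=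
  if x ∈ Set.Ioo (0 : ℝ) a then Real.exp (-lam * x) / a * (lam * a + 1 - lam * x) else 0

theorem ae_mem_of_withDensity {α : Type*} [MeasurableSpace α] {μ : Measure α}
    {f : α → ENNReal} {s : Set α} (hs : MeasurableSet s) (hf : ∀ x ∉ s, f x = 0) :
    ∀ᵐ x ∂μ.withDensity f, x ∈ s := by
  rw [ae_iff, ← compl_def, withDensity_apply _ hs.compl, setLIntegral_congr_fun hs.compl hf]
  simp

theorem ProbabilityTheory.IndepFun.measure_le_comp_eq_lintegral {Ω β : Type*}
    [MeasurableSpace Ω] [MeasurableSpace β] {μ : Measure Ω} [IsFiniteMeasure μ]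
    {η : Ω → ℝ} {ξ : Ω → β} (h : IndepFun η ξ μ) (hη : Measurable η) (hξ : Measurable ξ)
    {g : β → ℝ} (hg : Measurable g) :
    μ {ω | η ω ≤ g (ξ ω)} = ∫⁻ x, μ {ω | η ω ≤ g x} ∂μ.map ξ := by
  have hS : MeasurableSet {p : β × ℝ | p.2 ≤ g p.1} :=
    measurableSet_le measurable_snd (hg.comp measurable_fst)
  rw [show {ω | η ω ≤ g (ξ ω)} = (fun ω => (ξ ω, η ω)) ⁻¹' {p | p.2 ≤ g p.1} from rfl,
    ← Measure.map_apply (hξ.prodMk hη) hS,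
    (indepFun_iff_map_prod_eq_prod_map_map hξ.aemeasurable hη.aemeasurable).mp h.symm,
    Measure.prod_apply hS]
  congr 1 with x
  exact Measure.map_apply hη (measurableSet_Iic (a := g x))

theorem hasDerivAt_exp_neg_mul_mul_affine (c A b x : ℝ) (hc : c ≠ 0) :
    HasDerivAt (fun y => exp (-(c * y)) * (b / c ^ 2 - (A - b * y) / c))
      (exp (-(c * x)) * (A - b * x)) x := by
  have hexp : HasDerivAt (fun y => exp (-(c * y))) (exp (-(c * x)) * -c) x := by
    simpa using (((hasDerivAt_id x).const_mul c).neg).exp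
  have hlin : HasDerivAt (fun y => b / c ^ 2 - (A - b * y) / c) (b / c) x := by
    simpa [neg_div] using
      ((((hasDerivAt_id x).const_mul b).const_sub A).div_const c).const_sub (b / c ^ 2)
  refine (hexp.mul hlin).congr_deriv ?_
  field_simp
  ring

theorem integral_exp_neg_mul_mul_affine (c A b a : ℝ) (hc : c ≠ 0) :
    ∫ x in (0 : ℝ)..a, exp (-(c * x)) * (A - b * x)
      = exp (-(c * a)) * (b / c ^ 2 - (A - b * a) / c) - (b / c ^ 2 - A / c) := by
  rw [intervalIntegral.integral_eq_sub_of_hasDerivAt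
    (fun x _ => hasDerivAt_exp_neg_mul_mul_affine c A b x hc)
    (Continuous.intervalIntegrable (by fun_prop) _ _)]
  simp

theorem integral_minUExpPDF_mul_one_sub_exp (a lam t : ℝ) (ha : a ≠ 0) (hlam : lam ≠ 0)
    (hlt : lam + t ≠ 0) :
    ∫ x in (0 : ℝ)..a, exp (-lam * x) / a * (lam * a + 1 - lam * x) * (1 - exp (-(t * x)))
      = t / (lam + t) - t / (a * (lam + t) ^ 2) * (1 - exp (-a * (lam + t))) := by
  have hsplit : ∀ x, exp (-lam * x) / a * (lam * a + 1 - lam * x) * (1 - exp (-(t * x)))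
      = (exp (-(lam * x)) * (lam * a + 1 - lam * x)
        - exp (-((lam + t) * x)) * (lam * a + 1 - lam * x)) / a := by
    intro x
    rw [show -((lam + t) * x) = -(lam * x) + -(t * x) by ring, exp_add]
    ring_nf
  simp_rw [hsplit]
  rw [intervalIntegral.integral_div, intervalIntegral.integral_sub
      (Continuous.intervalIntegrable (by fun_prop) _ _)
      (Continuous.intervalIntegrable (by fun_prop) _ _),
    integral_exp_neg_mul_mul_affine _ _ _ _ hlam, integral_exp_neg_mul_mul_affine _ _ _ _ hlt,
    show -a * (lam + t) = -((lam + t) * a) by ring]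
  field_simp
  ring

section MinUExp

variable {a lam : ℝ}

theorem measurable_minUExpPDF (a lam : ℝ) : Measurable (minUExpPDF a lam) :=
  Measurable.ite measurableSet_Ioo (by fun_prop) measurable_const

theorem minUExpPDF_of_notMem {x : ℝ} (hx : x ∉ Ioo 0 a) : minUExpPDF a lam x = 0 :=
  if_neg hx

theorem minUExpPDF_nonneg (ha : 0 < a) (hlam : 0 ≤ lam) (x : ℝ) : 0 ≤ minUExpPDF a lam x := by
  unfold minUExpPDF
  split_ifs with hx
  · have : 0 ≤ lam * a + 1 - lam * x := by nlinarith [hx.2]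
    positivity
  · rfl

theorem lintegral_minUExpPDF_mul (ha : 0 < a) (hlam : 0 ≤ lam) {h : ℝ → ℝ}
    (hh : Continuous h) (h_nonneg : ∀ x ∈ Ioo 0 a, 0 ≤ h x) :
    ∫⁻ x, ENNReal.ofReal (minUExpPDF a lam x) * ENNReal.ofReal (h x)
      = ENNReal.ofReal
          (∫ x in (0 : ℝ)..a, exp (-lam * x) / a * (lam * a + 1 - lam * x) * h x) := by
  set f := fun x => exp (-lam * x) / a * (lam * a + 1 - lam * x) * h x
  have hf_nonneg : ∀ x ∈ Ioo 0 a, 0 ≤ f x := fun x hx => by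
    have := minUExpPDF_nonneg ha hlam x
    simp only [minUExpPDF, if_pos hx] at this
    exact mul_nonneg this (h_nonneg x hx)
  calc ∫⁻ x, ENNReal.ofReal (minUExpPDF a lam x) * ENNReal.ofReal (h x)
      = ∫⁻ x in Ioo 0 a, ENNReal.ofReal (f x) := by
        rw [← lintegral_indicator measurableSet_Ioo]
        congr 1 with x
        by_cases hx : x ∈ Ioo 0 a
        · rw [indicator_of_mem hx, ← ENNReal.ofReal_mul (minUExpPDF_nonneg ha hlam x),
            minUExpPDF, if_pos hx]
        · rw [indicator_of_notMem hx, minUExpPDF_of_notMem hx, ENNReal.ofReal_zero, zero_mul]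
    _ = ENNReal.ofReal (∫ x in Ioo 0 a, f x) :=
        (ofReal_integral_eq_lintegral_ofReal
          ((Continuous.integrableOn_Icc (by fun_prop)).mono_set Ioo_subset_Icc_self)
          ((ae_restrict_mem measurableSet_Ioo).mono hf_nonneg)).symm
    _ = _ := by rw [intervalIntegral.integral_of_le ha.le, integral_Ioc_eq_integral_Ioo]

end MinUExp

theorem expMinUExp_ratio_rep_general {Ω : Type*} [MeasureSpace Ω] [IsProbabilityMeasure (ℙ : Measure Ω)]
    (a lam : ℝ) (ha : 0 < a) (hlam : 0 < lam)
    (η ξ : Ω → ℝ) (hηm : Measurable η) (hξm : Measurable ξ)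
    (hη : ∀ t : ℝ, 0 ≤ t → ℙ {ω | η ω ≤ t} = ENNReal.ofReal (1 - Real.exp (-t)))
    (hξ : Measure.map ξ ℙ = volume.withDensity (fun x => ENNReal.ofReal (minUExpPDF a lam x)))
    (hindep : IndepFun η ξ ℙ) :
    ∀ t : ℝ, 0 < t →
      ℙ {ω | η ω / ξ ω ≤ t}
        = ENNReal.ofReal
            (t / (lam + t) - t / (a * (lam + t) ^ 2) * (1 - Real.exp (-a * (lam + t)))) := by
  intro t ht
  have hξ_mem : ∀ᵐ x ∂Measure.map ξ ℙ, x ∈ Ioo 0 a :=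
    hξ ▸ ae_mem_of_withDensity measurableSet_Ioo fun x hx => by
      rw [minUExpPDF_of_notMem hx, ENNReal.ofReal_zero]
  calc ℙ {ω | η ω / ξ ω ≤ t} = ℙ {ω | η ω ≤ t * ξ ω} := by
        refine measure_congr (Filter.eventuallyEq_set.mpr ?_)
        filter_upwards [ae_of_ae_map hξm.aemeasurable hξ_mem] with ω hω
        rw [div_le_iff₀ hω.1, mul_comm]
    _ = ∫⁻ x, ℙ {ω | η ω ≤ t * x} ∂Measure.map ξ ℙ :=
        hindep.measure_le_comp_eq_lintegral hηm hξm (measurable_const_mul t)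
    _ = ∫⁻ x, ENNReal.ofReal (1 - exp (-(t * x))) ∂Measure.map ξ ℙ := by
        refine lintegral_congr_ae ?_
        filter_upwards [hξ_mem] with x hx
        exact hη _ (mul_pos ht hx.1).le
    _ = ∫⁻ x, ENNReal.ofReal (minUExpPDF a lam x) * ENNReal.ofReal (1 - exp (-(t * x))) := by
        rw [hξ, lintegral_withDensity_eq_lintegral_mul _ (measurable_minUExpPDF a lam).ennreal_ofReal
          (by fun_prop)]
        rfl
    _ = _ := by
        rw [lintegral_minUExpPDF_mul ha hlam.le (by fun_prop) fun x hx => ?_,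
          integral_minUExpPDF_mul_one_sub_exp a lam t ha.ne' hlam.ne' (by positivity)]
        rw [sub_nonneg, exp_le_one_iff, neg_nonpos]
        exact (mul_pos ht hx.1).le

theorem expMinUExp_ratio_rep {Ω : Type*} [MeasureSpace Ω] [IsProbabilityMeasure (ℙ : Measure Ω)]
    (a lam : ℝ) (ha : 0 < a) (hlam : 0 < lam)
    (η ξ : Ω → ℝ) (hηm : Measurable η) (hξm : Measurable ξ)
    (hη : ∀ t : ℝ, 0 ≤ t → ℙ {ω | η ω ≤ t} = ENNReal.ofReal (1 - Real.exp (-t)))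
    (hηpos : ∀ᵐ ω ∂ℙ, 0 < η ω)
    (hξ : Measure.map ξ ℙ = volume.withDensity (fun x => ENNReal.ofReal (minUExpPDF a lam x)))
    (hindep : IndepFun η ξ ℙ) :
    ∀ t : ℝ, 0 < t →
      ℙ {ω | η ω / ξ ω ≤ t}
        = ENNReal.ofReal
            (t / (lam + t) - t / (a * (lam + t) ^ 2) * (1 - Real.exp (-a * (lam + t)))) :=
  expMinUExp_ratio_rep_general a lam ha hlam η ξ hηm hξm hη hξ hindep
end
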